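/- If T is (n,k)-quasi-*-paranormal and λ ≠ μ are complex numbers, then the eigenspaces ker(T − λ) and ker(T − μ) are orthogonal. -/

import Mathlib

/-! For an eigenvector `T x = λ • x` with `λ ≠ 0`, the defining inequality at `x` reduces, after
cancelling `‖λ‖ ^ (k (n + 1))`, to `‖T† x‖ ≤ ‖λ‖ ‖x‖`. Together with `⟪T† x, x⟫ = λ ‖x‖²` this forces
`‖T† x - conj λ • x‖ = 0`, so eigenvectors of `T` for nonzero eigenvalues are eigenvectors of `T†`.
Orthogonality of eigenspaces then follows as for normal operators, using whichever of the two
eigenvalues is nonzero. -/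

open ContinuousLinearMap

namespace ContinuousLinearMap

variable {𝕜 E : Type*} [RCLike 𝕜]

theorem pow_apply_of_apply_eq_smul [NormedAddCommGroup E] [NormedSpace 𝕜 E] {T : E →L[𝕜] E}
    {c : 𝕜} {x : E} (hx : T x = c • x) (m : ℕ) : (T ^ m) x = c ^ m • x := by
  induction m with
  | zero => simp
  | succ m ih => rw [pow_succ', mul_apply_eq_comp, ih, map_smul, hx, smul_smul, pow_succ]

variable [NormedAddCommGroup E] [InnerProductSpace 𝕜 E] [CompleteSpace E]

open RCLike ComplexConjugate in
theorem adjoint_apply_eq_conj_smul_of_norm_le {T : E →L[𝕜] E} {c : 𝕜} {x : E}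
    (hx : T x = c • x) (hle : ‖adjoint T x‖ ≤ ‖c‖ * ‖x‖) :
    adjoint T x = conj c • x := by
  have hinner : re (conj c * inner 𝕜 (adjoint T x) x) = ‖c‖ ^ 2 * ‖x‖ ^ 2 := by
    rw [adjoint_inner_left, hx, inner_smul_right, inner_self_eq_norm_sq_to_K, ← mul_assoc,
      RCLike.conj_mul, ← ofReal_pow, ← ofReal_pow, ← ofReal_mul, ofReal_re]
  have hsq : ‖adjoint T x - conj c • x‖ ^ 2 ≤ 0 := by
    rw [@norm_sub_sq 𝕜, inner_smul_right, hinner, norm_smul, norm_conj]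
    nlinarith [pow_le_pow_left₀ (norm_nonneg _) hle 2]
  exact sub_eq_zero.mp (norm_eq_zero.mp ((sq_nonpos_iff _).mp hsq))

theorem inner_eq_zero_of_adjoint_apply_eq_conj_smul {T : E →L[𝕜] E} {c d : 𝕜} {x y : E}
    (hx : adjoint T x = starRingEnd 𝕜 c • x) (hy : T y = d • y) (hne : c ≠ d) :
    inner 𝕜 x y = 0 := by
  have h : d * inner 𝕜 x y = c * inner 𝕜 x y := by
    rw [← inner_smul_right, ← hy, ← adjoint_inner_left, hx, inner_smul_left,
      RCLike.conj_conj]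
  exact (mul_eq_mul_right_iff.mp h).resolve_left hne.symm

end ContinuousLinearMap

section QuasiStarParanormal

variable {H : Type*} [NormedAddCommGroup H] [InnerProductSpace ℂ H] [CompleteSpace H]

def IsQuasiStarParanormal (n k : ℕ) (T : H →L[ℂ] H) : Prop :=
  ∀ x : H, ‖adjoint T (T ^ k <| x)‖ ^ (n + 1) ≤ ‖T ^ (n + 1) <| T ^ k <| x‖ * ‖T ^ k <| x‖ ^ n

namespace IsQuasiStarParanormal

variable {n k : ℕ} {T : H →L[ℂ] H} {c : ℂ} {x : H}

theorem norm_adjoint_apply_le (hT : IsQuasiStarParanormal n k T) (hc : c ≠ 0)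
    (hx : T x = c • x) : ‖adjoint T x‖ ≤ ‖c‖ * ‖x‖ := by
  have hpow := pow_apply_of_apply_eq_smul hx
  have h := hT x
  rw [hpow, map_smul, map_smul, hpow, norm_smul, norm_smul, norm_smul, norm_smul, norm_pow,
    norm_pow, mul_pow] at h
  have hck : 0 < (‖c‖ ^ k) ^ (n + 1) := by positivity
  refine (pow_le_pow_iff_left₀ (norm_nonneg _) (by positivity) (Nat.add_one_ne_zero n)).mp
    (le_of_mul_le_mul_left (h.trans_eq ?_) hck)
  ring

theorem adjoint_apply_eq_conj_smul (hT : IsQuasiStarParanormal n k T) (hc : c ≠ 0)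
    (hx : T x = c • x) : adjoint T x = starRingEnd ℂ c • x :=
  adjoint_apply_eq_conj_smul_of_norm_le hx (hT.norm_adjoint_apply_le hc hx)

theorem inner_eq_zero_of_apply_eq_smul (hT : IsQuasiStarParanormal n k T) {c d : ℂ} {y : H}
    (hne : c ≠ d) (hx : T x = c • x) (hy : T y = d • y) : inner ℂ x y = 0 := by
  rcases eq_or_ne c 0 with rfl | hc
  · exact inner_eq_zero_symm.mp <| inner_eq_zero_of_adjoint_apply_eq_conj_smul
      (hT.adjoint_apply_eq_conj_smul hne.symm hy) hx hne.symm
  · exact inner_eq_zero_of_adjoint_apply_eq_conj_smul (hT.adjoint_apply_eq_conj_smul hc hx) hy hne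

end IsQuasiStarParanormal

end QuasiStarParanormal

/-- If `T` is `(n,k)`-quasi-*-paranormal and `λ ≠ μ`, then `ker (T - λ) ⊥ ker (T - μ)`. -/
theorem stmt_16 {H : Type*} [NormedAddCommGroup H] [InnerProductSpace ℂ H] [CompleteSpace H]
    (T : H →L[ℂ] H) (n k : ℕ)
    (hT : ∀ x : H, ‖adjoint T (T ^ k <| x)‖ ^ (n + 1) ≤
      ‖T ^ (n + 1) <| T ^ k <| x‖ * ‖T ^ k <| x‖ ^ n)
    (lam mu : ℂ) (hne : lam ≠ mu) :
    ∀ x y : H, T x = lam • x → T y = mu • y → (inner ℂ x y : ℂ) = 0 :=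
  fun _ _ hx hy => IsQuasiStarParanormal.inner_eq_zero_of_apply_eq_smul hT hne hx hy
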